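/- arXiv:1412.2949 — 4 statements merged into one kernel-verified Lean document; each statement's English description precedes it below -/
import Mathlib

section
/- Let u = (u_n) be an a-sequence and x ∈ T with canonical representation x = Σ c_n/u_n such that the support I = {n : c_n ≠ 0} is infinite and {q_n : n ∈ I} diverges to infinity. If c_n/q_n → 0 in R as n → ∞ along I, then x ∈ t_u(T). -/
open Filter Topology

/-!
Write `u_n x = N_n + u_n R_n` with `N_n ∈ ℤ` and `R_n = ∑_{k>n} c_k/u_k`. Since `c_k ≤ q_k - 1`,
each term is at most `1/u_{k-1} - 1/u_k`, so the tails telescope: `∑_{k>p} c_k/u_k ≤ 1/u_p`.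
If `m` is the first index of the support after `n`, then `R_n = c_m/u_m + R_m ≤ (c_m + 1)/u_m`,
and `u_n ≤ u_{m-1}` gives `u_n R_n ≤ (c_m + 1)/q_m = c_m/q_m + 1/q_m`, which tends to `0`
along the support.
-/

lemma pos_of_strictMono_of_dvd_succ {u : ℕ → ℕ} (hu : StrictMono u)
    (hdvd : ∀ n, u n ∣ u (n + 1)) (n : ℕ) : 0 < u n := by
  have h0 : 0 < u 0 := Nat.pos_of_ne_zero fun h => by
    have h1 : u 1 = 0 := Nat.eq_zero_of_zero_dvd (h ▸ hdvd 0)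
    have := hu Nat.zero_lt_one
    omega
  exact h0.trans_le (hu.monotone n.zero_le)

lemma div_le_inv_sub_inv_of_lt_div {a b c : ℕ} (ha : 0 < a) (hab : a ∣ b) (hc : c < b / a) :
    (c : ℝ) / b ≤ 1 / a - 1 / b := by
  obtain ⟨q, rfl⟩ := hab
  rw [Nat.mul_div_cancel_left q ha] at hc
  have hq : (c : ℝ) + 1 ≤ q := by exact_mod_cast hc
  have hq' : 0 < q := by omega
  calc (c : ℝ) / (a * q : ℕ) ≤ (q - 1) / (a * q : ℕ) := by gcongr; linarith
    _ = 1 / a - 1 / (a * q : ℕ) := by push_cast; field_simp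

section Telescoping

variable {f g : ℕ → ℝ} (hg : 0 ≤ g) (hfg : ∀ k, f (k + 1) ≤ g k - g (k + 1))
include hg hfg

lemma sum_range_add_succ_le_of_le_sub (p N : ℕ) :
    ∑ i ∈ Finset.range N, f (i + (p + 1)) ≤ g p := by
  calc ∑ i ∈ Finset.range N, f (i + (p + 1))
      ≤ ∑ i ∈ Finset.range N, (g (p + i) - g (p + i + 1)) :=
        Finset.sum_le_sum fun i _ => by simpa [add_comm, add_left_comm, add_assoc] using hfg (p + i)
    _ = g p - g (p + N) := Finset.sum_range_sub' (fun i => g (p + i)) N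
    _ ≤ g p := sub_le_self _ (hg _)

lemma summable_of_le_sub (hf : 0 ≤ f) : Summable f :=
  (summable_nat_add_iff 1).1 <| summable_of_sum_range_le (fun _ => hf _)
    (by simpa using sum_range_add_succ_le_of_le_sub hg hfg 0)

lemma tsum_add_succ_le_of_le_sub (hf : 0 ≤ f) (p : ℕ) : ∑' i, f (i + (p + 1)) ≤ g p :=
  ((summable_nat_add_iff _).2 (summable_of_le_sub hg hfg hf)).tsum_le_of_sum_range_le
    (sum_range_add_succ_le_of_le_sub hg hfg p)

end Telescoping

lemma tsum_add_eq_of_eq_zero {G : Type*} [AddCommGroup G] [TopologicalSpace G]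
    [IsTopologicalAddGroup G] [T2Space G] {f : ℕ → G} (hf : Summable f) {a b : ℕ} (hab : a ≤ b)
    (h : ∀ i, a ≤ i → i < b → f i = 0) : ∑' i, f (i + a) = ∑' i, f (i + b) := by
  obtain ⟨d, rfl⟩ := Nat.exists_eq_add_of_le hab
  rw [← ((summable_nat_add_iff a).2 hf).sum_add_tsum_nat_add d,
    Finset.sum_eq_zero fun i hi => h _ (by omega) (by simp at hi; omega), zero_add]
  simp only [add_comm, add_left_comm]

lemma Set.Infinite.exists_tendsto_isLeast {S : Set ℕ} (hS : S.Infinite) :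
    ∃ m : ℕ → ℕ, Tendsto m atTop (atTop ⊓ 𝓟 S) ∧ ∀ n, IsLeast {i | i ∈ S ∧ n < i} (m n) := by
  have hne (n : ℕ) : {i | i ∈ S ∧ n < i}.Nonempty := hS.exists_gt n
  have hleast (n : ℕ) : IsLeast {i | i ∈ S ∧ n < i} (sInf {i | i ∈ S ∧ n < i}) :=
    ⟨Nat.sInf_mem (hne n), fun _ hi => Nat.sInf_le hi⟩
  refine ⟨_, tendsto_inf.2 ⟨?_, tendsto_principal.2 (.of_forall fun n => (hleast n).1.1)⟩, hleast⟩
  exact tendsto_atTop_mono (fun n => (hleast n).1.2.le) tendsto_id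

lemma tendsto_add_one_div_of_tendsto_div {ι : Type*} {L : Filter ι} {a q : ι → ℝ}
    (ha : Tendsto (fun i => a i / q i) L (𝓝 0)) (hq : Tendsto q L atTop) :
    Tendsto (fun i => (a i + 1) / q i) L (𝓝 0) := by
  simpa [add_div] using ha.add (tendsto_inv_atTop_zero.comp hq)

section ASequence

variable {u c : ℕ → ℕ} (hu : StrictMono u) (hdvd : ∀ n, u n ∣ u (n + 1))
  (hlt : ∀ n, 1 ≤ n → c n < u n / u (n - 1))
include hu hdvd hlt

lemma div_succ_le_inv_sub_inv (k : ℕ) : (c (k + 1) : ℝ) / u (k + 1) ≤ 1 / u k - 1 / u (k + 1) :=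
  div_le_inv_sub_inv_of_lt_div (pos_of_strictMono_of_dvd_succ hu hdvd k) (hdvd k)
    (by simpa using hlt (k + 1) k.succ_pos)

lemma summable_div : Summable fun k => (c k : ℝ) / u k :=
  summable_of_le_sub (fun _ => by positivity) (div_succ_le_inv_sub_inv hu hdvd hlt)
    (fun _ => by positivity)

lemma tsum_add_succ_div_le (p : ℕ) :
    ∑' i, (c (i + (p + 1)) : ℝ) / u (i + (p + 1)) ≤ 1 / u p :=
  tsum_add_succ_le_of_le_sub (f := fun k => (c k : ℝ) / u k) (fun _ => by positivity)
    (div_succ_le_inv_sub_inv hu hdvd hlt) (fun _ => by positivity) p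

lemma mul_tsum_add_succ_div_le {n m : ℕ} (hnm : n < m) (hgap : ∀ i, n < i → i < m → c i = 0) :
    (u n : ℝ) * ∑' i, (c (i + (n + 1)) : ℝ) / u (i + (n + 1))
      ≤ ((c m : ℝ) + 1) / (u m / u (m - 1) : ℕ) := by
  obtain ⟨j, rfl⟩ : ∃ j, m = j + 1 := ⟨m - 1, by omega⟩
  have hsum := summable_div hu hdvd hlt
  have hskip : ∑' i, (c (i + (n + 1)) : ℝ) / u (i + (n + 1))
      = ∑' i, (c (i + (j + 1)) : ℝ) / u (i + (j + 1)) :=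
    tsum_add_eq_of_eq_zero hsum (by omega) fun i hni hij => by simp [hgap i (by omega) hij]
  have hsplit : ∑' i, (c (i + (j + 1)) : ℝ) / u (i + (j + 1))
      = c (j + 1) / u (j + 1) + ∑' i, (c (i + (j + 1 + 1)) : ℝ) / u (i + (j + 1 + 1)) := by
    rw [((summable_nat_add_iff (j + 1)).2 hsum).tsum_eq_zero_add]
    simp only [zero_add, add_assoc, add_comm 1 (j + 1)]
  have huj : (0 : ℝ) < u j := by exact_mod_cast pos_of_strictMono_of_dvd_succ hu hdvd j
  have hun : (u n : ℝ) ≤ u j := by exact_mod_cast hu.monotone (by omega : n ≤ j)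
  calc (u n : ℝ) * ∑' i, (c (i + (n + 1)) : ℝ) / u (i + (n + 1))
      ≤ u j * (c (j + 1) / u (j + 1) + 1 / u (j + 1)) := by
        rw [hskip, hsplit]
        exact mul_le_mul hun (add_le_add_right (tsum_add_succ_div_le hu hdvd hlt (j + 1)) _)
          (add_nonneg (by positivity) (tsum_nonneg fun _ => by positivity)) huj.le
    _ = ((c (j + 1) : ℝ) + 1) / (u (j + 1) / u (j + 1 - 1) : ℕ) := by
        rw [Nat.add_sub_cancel, Nat.cast_div (hdvd j) huj.ne']
        field_simp

lemma zsmul_coe_tsum_div (n : ℕ) :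
    (u n : ℤ) • ((∑' k, (c k : ℝ) / u k : ℝ) : AddCircle (1 : ℝ))
      = ((u n * ∑' i, (c (i + (n + 1)) : ℝ) / u (i + (n + 1)) : ℝ) : AddCircle (1 : ℝ)) := by
  set z : ℕ := ∑ k ∈ Finset.range (n + 1), c k * (u n / u k)
  have hz : (u n : ℝ) * ∑ k ∈ Finset.range (n + 1), (c k : ℝ) / u k = z := by
    rw [Finset.mul_sum, Nat.cast_sum]
    refine Finset.sum_congr rfl fun k hk => ?_
    have hkn : k ≤ n := Nat.lt_succ_iff.1 (Finset.mem_range.1 hk)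
    have huk : (u k : ℝ) ≠ 0 := by exact_mod_cast (pos_of_strictMono_of_dvd_succ hu hdvd k).ne'
    rw [Nat.cast_mul, Nat.cast_div (Nat.rel_of_forall_rel_succ_of_le (· ∣ ·) hdvd hkn) huk]
    field_simp
  have hz0 : ((z : ℝ) : AddCircle (1 : ℝ)) = 0 := (AddCircle.coe_eq_zero_iff 1).2 ⟨z, by simp⟩
  rw [← AddCircle.coe_zsmul, zsmul_eq_mul, Int.cast_natCast,
    ← (summable_div hu hdvd hlt).sum_add_tsum_nat_add (n + 1), mul_add, hz, AddCircle.coe_add,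
    hz0, zero_add]

end ASequence

theorem mem_tu_of_divergent_support_general (u : ℕ → ℕ) (hu : StrictMono u)
    (hdvd : ∀ n, u n ∣ u (n + 1))
    (c : ℕ → ℕ)
    (hlt : ∀ n, 1 ≤ n → c n < u n / u (n - 1))
    (x : ℝ) (hx : x = ∑' n : ℕ, (c n : ℝ) / u n)
    (hsupp : {n : ℕ | c n ≠ 0}.Infinite)
    (hdiv : Tendsto (fun n => (u n / u (n - 1) : ℕ))
        (atTop ⊓ 𝓟 {n : ℕ | c n ≠ 0}) atTop)
    (hratio : Tendsto (fun n => (c n : ℝ) / (u n / u (n - 1) : ℕ))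
        (atTop ⊓ 𝓟 {n : ℕ | c n ≠ 0}) (𝓝 0)) :
    Tendsto (fun n => (u n : ℤ) • ((x : AddCircle (1 : ℝ))))
      atTop (𝓝 0) := by
  obtain ⟨m, hm, hm_least⟩ := hsupp.exists_tendsto_isLeast
  have hbound (n : ℕ) : (u n : ℝ) * ∑' i, (c (i + (n + 1)) : ℝ) / u (i + (n + 1))
      ≤ ((c (m n) : ℝ) + 1) / (u (m n) / u (m n - 1) : ℕ) :=
    mul_tsum_add_succ_div_le hu hdvd hlt (hm_least n).1.2 fun i hni him =>
      by_contra fun hci => ((hm_least n).2 ⟨hci, hni⟩).not_gt him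
  have hlim : Tendsto (fun n => (u n : ℝ) * ∑' i, (c (i + (n + 1)) : ℝ) / u (i + (n + 1)))
      atTop (𝓝 0) :=
    tendsto_of_tendsto_of_tendsto_of_le_of_le tendsto_const_nhds
      ((tendsto_add_one_div_of_tendsto_div hratio
        (tendsto_natCast_atTop_atTop.comp hdiv)).comp hm)
      (fun n => mul_nonneg (by positivity) (tsum_nonneg fun _ => by positivity)) hbound
  simp only [hx, zsmul_coe_tsum_div hu hdvd hlt]
  exact (AddCircle.continuous_mk' 1).continuousAt.tendsto.comp hlim

/-- If `u` is an a-sequence and `x` has canonical representation `∑ c_n / u_n`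
with infinite `u`-divergent support (the ratios `q_n = u_n / u_{n-1}` diverge
to infinity along the support), and `c_n / q_n → 0` in `ℝ` along the support,
then `u_n • x → 0` in `𝕋`. -/
theorem mem_tu_of_divergent_support (u : ℕ → ℕ) (hu : StrictMono u)
    (hpos : 1 ≤ u 0) (hdvd : ∀ n, u n ∣ u (n + 1))
    (c : ℕ → ℕ) (hc0 : c 0 = 0)
    (hlt : ∀ n, 1 ≤ n → c n < u n / u (n - 1))
    (hcan : {n : ℕ | 1 ≤ n ∧ c n < u n / u (n - 1) - 1}.Infinite)
    (x : ℝ) (hx : x = ∑' n : ℕ, (c n : ℝ) / u n)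
    (hsupp : {n : ℕ | c n ≠ 0}.Infinite)
    (hdiv : Tendsto (fun n => (u n / u (n - 1) : ℕ))
        (atTop ⊓ 𝓟 {n : ℕ | c n ≠ 0}) atTop)
    (hratio : Tendsto (fun n => (c n : ℝ) / (u n / u (n - 1) : ℕ))
        (atTop ⊓ 𝓟 {n : ℕ | c n ≠ 0}) (𝓝 0)) :
    Tendsto (fun n => (u n : ℤ) • ((x : AddCircle (1 : ℝ))))
      atTop (𝓝 0) :=
  mem_tu_of_divergent_support_general u hu hdvd c hlt x hx hsupp hdiv hratio
end

section
/- Let u = (u_n) be an a-sequence and x ∈ T with canonical representation x = Σ c_n/u_n having u-divergent support (i.e., q_n → ∞ along the support). If the sequence c_n/q_n (taken along the support) does not converge to 0 in T, then u_n·x does not converge to 0 in T. -/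
open Filter Topology

/-! Multiplying by `u (n-1)` turns the digits below `n` into integers, so modulo `1`,
`u (n-1) • x = c n / q n + R n` with `R n = u (n-1) * ∑_{k > n} c k / u k`. Since
`c k / u k ≤ 1 / u (k-1) - 1 / u k`, the tail telescopes and `0 ≤ R n ≤ u (n-1) / u n = 1 / q n`.
Along the support `q n → ∞`, so if `u n • x → 0` then `c n / q n = u (n-1) • x - R n → 0`. -/

open Finset in
lemma summable_and_tsum_le_of_le_sub_succ {f g : ℕ → ℝ} (hf : ∀ k, 0 ≤ f k) (hg : ∀ k, 0 ≤ g k)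
    (hfg : ∀ k, f k ≤ g k - g (k + 1)) : Summable f ∧ ∑' k, f k ≤ g 0 := by
  have hpartial (n : ℕ) : ∑ k ∈ range n, f k ≤ g 0 :=
    calc ∑ k ∈ range n, f k ≤ ∑ k ∈ range n, (g k - g (k + 1)) := sum_le_sum fun k _ => hfg k
      _ = g 0 - g n := sum_range_sub' g n
      _ ≤ g 0 := sub_le_self _ (hg n)
  exact ⟨summable_of_sum_range_le hf hpartial, Real.tsum_le_of_sum_range_le hf hpartial⟩

lemma div_mul_le_inv_sub_inv {a b m : ℕ} (hb : 0 < b) (ha : a < m) :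
    (a : ℝ) / (b * m) ≤ 1 / b - 1 / (b * m) := by
  have hb' : (0 : ℝ) < b := Nat.cast_pos.mpr hb
  have hm : (0 : ℝ) < m := Nat.cast_pos.mpr ((Nat.zero_le a).trans_lt ha)
  have ha' : (a : ℝ) + 1 ≤ m := by exact_mod_cast ha
  calc (a : ℝ) / (b * m) ≤ (m - 1) / (b * m) := by gcongr; linarith
    _ = 1 / b - 1 / (b * m) := by field_simp

section CanonicalRepresentation

variable {u c : ℕ → ℕ}

lemma pos_of_lt_div_pred (hlt : ∀ n, 1 ≤ n → c n < u n / u (n - 1)) (k : ℕ) : 0 < u k := by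
  -- `u (k + 1) / 0 = 0` in `ℕ`, so the digit bound at `k + 1` already rules out `u k = 0`.
  have h := hlt (k + 1) k.succ_pos
  refine Nat.pos_of_ne_zero fun hk => ?_
  simp [hk] at h

lemma dvd_of_le_of_dvd_succ (hdvd : ∀ n, u n ∣ u (n + 1)) {k m : ℕ} (h : k ≤ m) : u k ∣ u m :=
  Nat.rel_of_forall_rel_succ_of_le (· ∣ ·) hdvd h

lemma natCast_div_pred (hdvd : ∀ n, u n ∣ u (n + 1)) (hlt : ∀ n, 1 ≤ n → c n < u n / u (n - 1))
    (n : ℕ) : ((u n / u (n - 1) : ℕ) : ℝ) = u n / u (n - 1) :=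
  Nat.cast_div (dvd_of_le_of_dvd_succ hdvd (Nat.sub_le n 1))
    (Nat.cast_ne_zero.mpr (pos_of_lt_div_pred hlt _).ne')

lemma digit_div_le (hdvd : ∀ n, u n ∣ u (n + 1)) (hlt : ∀ n, 1 ≤ n → c n < u n / u (n - 1))
    (k : ℕ) : (c (k + 1) : ℝ) / u (k + 1) ≤ 1 / u k - 1 / u (k + 1) := by
  have h := div_mul_le_inv_sub_inv (pos_of_lt_div_pred hlt k) (hlt (k + 1) k.succ_pos)
  rwa [Nat.add_sub_cancel, ← Nat.cast_mul, Nat.mul_div_cancel' (hdvd k)] at h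

lemma summable_and_tsum_tail_le (hdvd : ∀ n, u n ∣ u (n + 1))
    (hlt : ∀ n, 1 ≤ n → c n < u n / u (n - 1)) (n : ℕ) :
    Summable (fun j => (c (j + (n + 1)) : ℝ) / u (j + (n + 1))) ∧
      ∑' j, (c (j + (n + 1)) : ℝ) / u (j + (n + 1)) ≤ 1 / u n := by
  have h := summable_and_tsum_le_of_le_sub_succ
    (f := fun j => (c (j + (n + 1)) : ℝ) / u (j + (n + 1))) (g := fun j => 1 / (u (j + n) : ℝ))
    (fun _ => by positivity) (fun _ => by positivity) fun j => by
      simpa only [← add_assoc, add_right_comm j 1 n] using digit_div_le hdvd hlt (j + n)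
  rwa [zero_add] at h

lemma summable_digit_div (hdvd : ∀ n, u n ∣ u (n + 1))
    (hlt : ∀ n, 1 ≤ n → c n < u n / u (n - 1)) : Summable (fun k => (c k : ℝ) / u k) :=
  (summable_nat_add_iff 1).mp (by simpa using (summable_and_tsum_tail_le hdvd hlt 0).1)

open Finset in
lemma exists_natCast_mul_tsum_eq (hdvd : ∀ n, u n ∣ u (n + 1))
    (hlt : ∀ n, 1 ≤ n → c n < u n / u (n - 1)) {n : ℕ} (hn : 1 ≤ n) :
    ∃ N : ℕ, (u (n - 1) : ℝ) * ∑' k, (c k : ℝ) / u k =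
      N + (c n : ℝ) / (u n / u (n - 1) : ℕ) +
        u (n - 1) * ∑' j, (c (j + (n + 1)) : ℝ) / u (j + (n + 1)) := by
  have hpos := pos_of_lt_div_pred hlt
  refine ⟨∑ k ∈ range n, c k * (u (n - 1) / u k), ?_⟩
  rw [← (summable_digit_div hdvd hlt).sum_add_tsum_nat_add (n + 1), sum_range_succ, mul_add,
    mul_add, mul_sum, Nat.cast_sum]
  congr 2
  · refine sum_congr rfl fun k hk => ?_
    have hk' : k ≤ n - 1 := by have := mem_range.mp hk; omega
    rw [Nat.cast_mul, Nat.cast_div (dvd_of_le_of_dvd_succ hdvd hk') (by exact_mod_cast (hpos k).ne')]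
    field_simp
  · rw [natCast_div_pred hdvd hlt]
    field_simp

lemma norm_zsmul_coe_sub_coe_le (hdvd : ∀ n, u n ∣ u (n + 1))
    (hlt : ∀ n, 1 ≤ n → c n < u n / u (n - 1)) {n : ℕ} (hn : 1 ≤ n) :
    ‖(u (n - 1) : ℤ) • ((∑' k, (c k : ℝ) / u k : ℝ) : AddCircle (1 : ℝ)) -
        (((c n : ℝ) / (u n / u (n - 1) : ℕ) : ℝ) : AddCircle (1 : ℝ))‖ ≤
      ((u n / u (n - 1) : ℕ) : ℝ)⁻¹ := by
  obtain ⟨N, hN⟩ := exists_natCast_mul_tsum_eq hdvd hlt hn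
  obtain ⟨-, htail⟩ := summable_and_tsum_tail_le hdvd hlt n
  set R := (u (n - 1) : ℝ) * ∑' j, (c (j + (n + 1)) : ℝ) / u (j + (n + 1))
  have hR : (u (n - 1) : ℤ) • ((∑' k, (c k : ℝ) / u k : ℝ) : AddCircle (1 : ℝ)) -
      (((c n : ℝ) / (u n / u (n - 1) : ℕ) : ℝ) : AddCircle (1 : ℝ)) = (R : AddCircle (1 : ℝ)) := by
    have hN0 : ((N : ℝ) : AddCircle (1 : ℝ)) = 0 := by
      rw [AddCircle.coe_eq_zero_iff]; exact ⟨N, by simp⟩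
    rw [← AddCircle.coe_zsmul, ← AddCircle.coe_sub, zsmul_eq_mul, Int.cast_natCast, hN,
      add_sub_right_comm, add_sub_cancel_right, AddCircle.coe_add, hN0, zero_add]
  have hR0 : 0 ≤ R := mul_nonneg (Nat.cast_nonneg _) (tsum_nonneg fun _ => by positivity)
  rw [hR]
  calc ‖(R : AddCircle (1 : ℝ))‖ ≤ |R| := QuotientAddGroup.norm_mk_le_norm
    _ = R := abs_of_nonneg hR0
    _ ≤ u (n - 1) * (1 / u n) := mul_le_mul_of_nonneg_left htail (Nat.cast_nonneg _)
    _ = ((u n / u (n - 1) : ℕ) : ℝ)⁻¹ := by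
      rw [natCast_div_pred hdvd hlt]
      field_simp

end CanonicalRepresentation

theorem not_mem_tu_of_ratio_not_tendsto_general (u : ℕ → ℕ) (hdvd : ∀ n, u n ∣ u (n + 1))
    (c : ℕ → ℕ)
    (hlt : ∀ n, 1 ≤ n → c n < u n / u (n - 1))
    (x : ℝ) (hx : x = ∑' n : ℕ, (c n : ℝ) / u n)
    (hdiv : Tendsto (fun n => (u n / u (n - 1) : ℕ))
        (atTop ⊓ 𝓟 {n : ℕ | c n ≠ 0}) atTop)
    (hratio : ¬ Tendsto
        (fun n => (((c n : ℝ) / (u n / u (n - 1) : ℕ) : ℝ) : AddCircle (1 : ℝ)))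
        (atTop ⊓ 𝓟 {n : ℕ | c n ≠ 0}) (𝓝 0)) :
    ¬ Tendsto (fun n => (u n : ℤ) • ((x : AddCircle (1 : ℝ))))
        atTop (𝓝 0) := by
  intro h
  subst hx
  apply hratio
  set L := atTop ⊓ 𝓟 {n : ℕ | c n ≠ 0}
  set y : AddCircle (1 : ℝ) := ((∑' k, (c k : ℝ) / u k : ℝ) : AddCircle (1 : ℝ))
  have hshift : Tendsto (fun n => (u (n - 1) : ℤ) • y) L (𝓝 0) :=
    h.comp ((tendsto_sub_atTop_nat 1).mono_left inf_le_left)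
  have hinv : Tendsto (fun n => ((u n / u (n - 1) : ℕ) : ℝ)⁻¹) L (𝓝 0) :=
    (tendsto_natCast_atTop_atTop.comp hdiv).inv_tendsto_atTop
  have herr : Tendsto (fun n => (u (n - 1) : ℤ) • y -
      (((c n : ℝ) / (u n / u (n - 1) : ℕ) : ℝ) : AddCircle (1 : ℝ))) L (𝓝 0) := by
    refine squeeze_zero_norm' ?_ hinv
    filter_upwards [(eventually_ge_atTop 1).filter_mono inf_le_left] with n hn
    exact norm_zsmul_coe_sub_coe_le hdvd hlt hn
  simpa only [sub_sub_cancel, sub_zero] using hshift.sub herr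

/-- If `u` is an a-sequence and `x` has canonical representation `∑ c_n / u_n`
with infinite `u`-divergent support, and `c_n / q_n` (viewed in `𝕋 = ℝ/ℤ`) does
not tend to `0` along the support, then `u_n • x` does not tend to `0` in `𝕋`. -/
theorem not_mem_tu_of_ratio_not_tendsto (u : ℕ → ℕ) (hu : StrictMono u)
    (hpos : 1 ≤ u 0) (hdvd : ∀ n, u n ∣ u (n + 1))
    (c : ℕ → ℕ) (hc0 : c 0 = 0)
    (hlt : ∀ n, 1 ≤ n → c n < u n / u (n - 1))
    (hcan : {n : ℕ | 1 ≤ n ∧ c n < u n / u (n - 1) - 1}.Infinite)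
    (x : ℝ) (hx : x = ∑' n : ℕ, (c n : ℝ) / u n)
    (hsupp : {n : ℕ | c n ≠ 0}.Infinite)
    (hdiv : Tendsto (fun n => (u n / u (n - 1) : ℕ))
        (atTop ⊓ 𝓟 {n : ℕ | c n ≠ 0}) atTop)
    (hratio : ¬ Tendsto
        (fun n => (((c n : ℝ) / (u n / u (n - 1) : ℕ) : ℝ) : AddCircle (1 : ℝ)))
        (atTop ⊓ 𝓟 {n : ℕ | c n ≠ 0}) (𝓝 0)) :
    ¬ Tendsto (fun n => (u n : ℤ) • ((x : AddCircle (1 : ℝ))))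
        atTop (𝓝 0) :=
  not_mem_tu_of_ratio_not_tendsto_general u hdvd c hlt x hx hdiv hratio
end

section
/- Let u be an a-sequence and let x = a/b (mod 1) be a torsion element of T with gcd(a,b) = 1 and 0 ≤ a < b. If u_n·x → 0 in T, then b divides u_m for some m, hence x = k/u_m for some integer k. -/
open Filter Topology

/-!
Since `a` and `b` are coprime, `x = a/b` has order exactly `b` in `𝕋`, so its multiples form a
finite set. In a T1 group the nonzero elements of a finite set stay away from `0`; hence
`u_n • x → 0` forces `u_n • x = 0`, i.e. `b ∣ u_n`, for all large `n`.
Taking such an `n ≥ 1` makes `u_n ≥ n` nonzero, so `a/b = k/u_n` is not a division by `0`.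
-/

theorem IsOfFinAddOrder.eventually_zsmul_eq_zero {α G : Type*} [AddGroup G] [TopologicalSpace G]
    [T1Space G] {x : G} (hx : IsOfFinAddOrder x) {l : Filter α} {f : α → ℤ}
    (h : Tendsto (fun i => f i • x) l (𝓝 0)) : ∀ᶠ i in l, f i • x = 0 := by
  set S : Set G := (AddSubgroup.zmultiples x : Set G) \ {0}
  have hS : IsOpen Sᶜ := (hx.finite_zmultiples.sdiff).isClosed.isOpen_compl
  filter_upwards [h.eventually (hS.mem_nhds (by simp [S]))] with i hi
  by_contra hne
  exact hi ⟨AddSubgroup.zsmul_mem_zmultiples x _, hne⟩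

theorem Nat.cast_div_eq_cast_mul_div_of_dvd {K : Type*} [Field K] [CharZero K] {a b n : ℕ}
    (hbn : b ∣ n) (hn : n ≠ 0) : (a : K) / b = ((a * (n / b) : ℕ) : K) / n := by
  obtain ⟨c, rfl⟩ := hbn
  have hb : b ≠ 0 := left_ne_zero_of_mul hn
  have hc : c ≠ 0 := right_ne_zero_of_mul hn
  rw [Nat.mul_div_cancel_left c (Nat.pos_of_ne_zero hb)]
  push_cast
  field_simp

theorem torsion_denominator_divides_general (u : ℕ → ℕ) (hu : StrictMono u)
    (a b : ℕ) (hab : Nat.Coprime a b) (ha : a < b)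
    (h : Tendsto (fun n => (u n : ℤ) • (((a : ℝ) / b : ℝ) : AddCircle (1 : ℝ)))
        atTop (𝓝 0)) :
    ∃ m : ℕ, b ∣ u m ∧ ∃ k : ℕ, (a : ℝ) / b = (k : ℝ) / u m := by
  have hb : 0 < b := (Nat.zero_le a).trans_lt ha
  have hord : addOrderOf (((a : ℝ) / b : ℝ) : AddCircle (1 : ℝ)) = b := by
    simpa using AddCircle.addOrderOf_div_of_gcd_eq_one (p := (1 : ℝ)) hb hab
  have hfin : IsOfFinAddOrder (((a : ℝ) / b : ℝ) : AddCircle (1 : ℝ)) := by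
    rw [← addOrderOf_pos_iff, hord]
    exact hb
  obtain ⟨m, hzero, hm⟩ :=
    ((hfin.eventually_zsmul_eq_zero h).and (eventually_ge_atTop 1)).exists
  have hbm : b ∣ u m := by
    have := addOrderOf_dvd_iff_zsmul_eq_zero.mpr hzero
    rwa [hord, Int.natCast_dvd_natCast] at this
  have hum : u m ≠ 0 := (Nat.lt_of_lt_of_le hm (hu.id_le m)).ne'
  exact ⟨m, hbm, _, Nat.cast_div_eq_cast_mul_div_of_dvd hbm hum⟩

/-- For an a-sequence `u`, if `x = a/b` (mod 1) with `gcd(a,b) = 1`, `0 ≤ a < b`,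
and `u_n • x → 0` in `𝕋`, then `b ∣ u_m` for some `m`; hence `x = k / u_m` for
some integer `k`. -/
theorem torsion_denominator_divides (u : ℕ → ℕ) (hu : StrictMono u)
    (hpos : 1 ≤ u 0) (hdvd : ∀ n, u n ∣ u (n + 1))
    (a b : ℕ) (hab : Nat.Coprime a b) (ha : a < b)
    (h : Tendsto (fun n => (u n : ℤ) • (((a : ℝ) / b : ℝ) : AddCircle (1 : ℝ)))
        atTop (𝓝 0)) :
    ∃ m : ℕ, b ∣ u m ∧ ∃ k : ℕ, (a : ℝ) / b = (k : ℝ) / u m :=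
  torsion_denominator_divides_general u hu a b hab ha h
end

section
/- Let X be a compact metrizable abelian group and v = (v_n) a sequence of characters of X. The characterized subgroup s_v(X) = {x ∈ X : v_n(x) → 0 in T} with the restriction of the topology τ_v (induced by ρ_v(x,y) = sup{δ(x,y), sup_n d(v_n(x),v_n(y))}) is a Polish group; in particular every characterized subgroup of X is Polishable. -/
open Filter Topology

/-!
Since `ρ_v` dominates `δ` and every `d(v_n x, v_n y)`, a `ρ_v`-Cauchy sequence has a `δ`-limit `x`;
continuity of the `v_n` carries the `ρ_v`-Cauchy bounds to `x`, so the sequence tends to `x` for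
`ρ_v`, and `s_v(X)` is `ρ_v`-closed.
For separability: if `d(v_n x, 0) ≤ r` and `d(v_n y, 0) ≤ r` for `n ≥ N`, then `ρ_v(x, y)` is
controlled by `2r`, `δ(x, y)` and the first `N` coordinates, which are `δ`-continuous. So a
`δ`-dense countable subset of each of the countably many sets of such points (`r = 1/(k+1)`)
does the job.
-/

/-- `ρ_v(x,y) = sup{δ(x,y), sup_n d(v_n x, v_n y)}`. -/
noncomputable def rhoV {X : Type*} [MetricSpace X]
    (v : ℕ → X → AddCircle (1 : ℝ)) (x y : X) : ℝ :=
  max (dist x y) (⨆ n : ℕ, dist (v n x) (v n y))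

lemma eventually_forall_lt_dist_apply_lt {X Y : Type*} [TopologicalSpace X] [PseudoMetricSpace Y]
    {f : ℕ → X → Y} (hf : ∀ n, Continuous (f n)) (x : X) (N : ℕ) {ε : ℝ} (hε : 0 < ε) :
    ∀ᶠ y in 𝓝 x, ∀ n < N, dist (f n x) (f n y) < ε :=
  (eventually_all_finite (Set.finite_lt_nat N)).2 fun n _ =>
    (Metric.tendsto_nhds.1 ((hf n).tendsto x) ε hε).mono fun _ hy => by rwa [dist_comm]

section rhoV

variable {X : Type*} [MetricSpace X] {v : ℕ → X → AddCircle (1 : ℝ)}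

lemma bddAbove_range_dist_addCircle (a b : ℕ → AddCircle (1 : ℝ)) :
    BddAbove (Set.range fun n => dist (a n) (b n)) := by
  refine ⟨1 / 2, ?_⟩
  rintro _ ⟨n, rfl⟩
  simpa [dist_eq_norm] using AddCircle.norm_le_half_period 1 (x := a n - b n) one_ne_zero

lemma dist_le_rhoV (v : ℕ → X → AddCircle (1 : ℝ)) (x y : X) : dist x y ≤ rhoV v x y :=
  le_max_left _ _

lemma dist_apply_le_rhoV (v : ℕ → X → AddCircle (1 : ℝ)) (x y : X) (n : ℕ) :
    dist (v n x) (v n y) ≤ rhoV v x y :=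
  (le_ciSup (bddAbove_range_dist_addCircle (fun n => v n x) (fun n => v n y)) n).trans
    (le_max_right _ _)

lemma rhoV_nonneg (v : ℕ → X → AddCircle (1 : ℝ)) (x y : X) : 0 ≤ rhoV v x y :=
  dist_nonneg.trans (dist_le_rhoV v x y)

lemma rhoV_le {x y : X} {ε : ℝ} (h : dist x y ≤ ε) (hv : ∀ n, dist (v n x) (v n y) ≤ ε) :
    rhoV v x y ≤ ε :=
  max_le h (ciSup_le hv)

lemma rhoV_le_of_tail_le {x y : X} {ε : ℝ} {N : ℕ} (h : dist x y ≤ ε)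
    (hhead : ∀ n < N, dist (v n x) (v n y) ≤ ε)
    (hx : ∀ n ≥ N, dist (v n x) 0 ≤ ε / 2) (hy : ∀ n ≥ N, dist (v n y) 0 ≤ ε / 2) :
    rhoV v x y ≤ ε := by
  refine rhoV_le h fun n => ?_
  rcases lt_or_ge n N with hn | hn
  · exact hhead n hn
  · calc dist (v n x) (v n y) ≤ dist (v n x) 0 + dist (v n y) 0 := dist_triangle_right _ _ _
      _ ≤ ε / 2 + ε / 2 := add_le_add (hx n hn) (hy n hn)
      _ = ε := add_halves ε

lemma rhoV_le_of_tendsto (hcont : ∀ n, Continuous (v n)) {s : ℕ → X} {x y : X} {ε : ℝ}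
    (hs : Tendsto s atTop (𝓝 y)) (h : ∀ᶠ m in atTop, rhoV v x (s m) ≤ ε) :
    rhoV v x y ≤ ε := by
  refine rhoV_le (le_of_tendsto (tendsto_const_nhds.dist hs) ?_) fun n => ?_
  · exact h.mono fun m hm => (dist_le_rhoV v _ _).trans hm
  · refine le_of_tendsto (tendsto_const_nhds.dist (((hcont n).tendsto y).comp hs)) ?_
    exact h.mono fun m hm => (dist_apply_le_rhoV v _ _ n).trans hm

lemma tendsto_zero_of_tendsto_rhoV {s : ℕ → X} {x : X}
    (hs : ∀ m, Tendsto (fun n => v n (s m)) atTop (𝓝 0))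
    (hx : Tendsto (fun m => rhoV v (s m) x) atTop (𝓝 0)) :
    Tendsto (fun n => v n x) atTop (𝓝 0) := by
  refine Metric.tendsto_atTop.2 fun ε hε => ?_
  obtain ⟨m, hm⟩ := (Metric.tendsto_atTop.1 hx (ε / 2) (half_pos hε)).imp fun M hM => hM M le_rfl
  obtain ⟨N, hN⟩ := Metric.tendsto_atTop.1 (hs m) (ε / 2) (half_pos hε)
  refine ⟨N, fun n hn => ?_⟩
  rw [Real.dist_eq, sub_zero, abs_of_nonneg (rhoV_nonneg v _ _)] at hm
  calc dist (v n x) 0 ≤ dist (v n (s m)) (v n x) + dist (v n (s m)) 0 :=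
        dist_triangle_left _ _ _
    _ < ε / 2 + ε / 2 :=
        add_lt_add_of_le_of_lt ((dist_apply_le_rhoV v _ _ n).trans hm.le) (hN n hn)
    _ = ε := add_halves ε

theorem exists_countable_rhoV_dense [TopologicalSpace.SeparableSpace X]
    (hcont : ∀ n, Continuous (v n)) :
    ∃ D : Set X, D.Countable ∧ (∀ d ∈ D, Tendsto (fun n => v n d) atTop (𝓝 0)) ∧
      ∀ x : X, Tendsto (fun n => v n x) atTop (𝓝 0) →
        ∀ ε > (0 : ℝ), ∃ d ∈ D, rhoV v x d < ε := by
  choose D hDsub hDcount hDdense using fun p : ℕ × ℕ =>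
    (TopologicalSpace.IsSeparable.of_separableSpace {x : X |
      Tendsto (fun n => v n x) atTop (𝓝 0) ∧ ∀ n ≥ p.1, dist (v n x) 0 ≤ 1 / (p.2 + 1)}
      ).exists_countable_dense_subset
  refine ⟨⋃ p, D p, Set.countable_iUnion hDcount, fun d hd => ?_, fun x hx ε hε => ?_⟩
  · obtain ⟨p, hp⟩ := Set.mem_iUnion.1 hd
    exact (hDsub p hp).1
  obtain ⟨k, hk⟩ := exists_nat_one_div_lt (half_pos (half_pos hε))
  obtain ⟨N, hN⟩ := Metric.tendsto_atTop.1 hx _ (Nat.one_div_pos_of_nat (n := k))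
  have hx_mem : x ∈ closure (D (N, k)) := hDdense (N, k) ⟨hx, fun n hn => (hN n hn).le⟩
  have hnear : ∀ᶠ y in 𝓝 x, dist x y < ε / 2 ∧ ∀ n < N, dist (v n x) (v n y) < ε / 2 := by
    filter_upwards [Metric.ball_mem_nhds x (half_pos hε),
      eventually_forall_lt_dist_apply_lt hcont x N (half_pos hε)] with y hy hhead
    exact ⟨by rwa [Metric.mem_ball, dist_comm] at hy, hhead⟩
  obtain ⟨d, ⟨hdist, hhead⟩, hd⟩ :=
    (hnear.and_frequently (mem_closure_iff_frequently.1 hx_mem)).exists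
  refine ⟨d, Set.mem_iUnion.2 ⟨(N, k), hd⟩, ?_⟩
  have hρ : rhoV v x d ≤ ε / 2 :=
    rhoV_le_of_tail_le hdist.le (fun n hn => (hhead n hn).le)
      (fun n hn => (hN n hn).le.trans hk.le) (fun n hn => ((hDsub _ hd).2 n hn).trans hk.le)
  linarith

theorem exists_tendsto_rhoV_of_cauchy [CompleteSpace X] (hcont : ∀ n, Continuous (v n))
    {s : ℕ → X} (hs : ∀ n, Tendsto (fun m => v m (s n)) atTop (𝓝 0))
    (hcau : ∀ ε > (0 : ℝ), ∃ N, ∀ m ≥ N, ∀ n ≥ N, rhoV v (s m) (s n) < ε) :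
    ∃ x : X, Tendsto (fun n => v n x) atTop (𝓝 0) ∧
      Tendsto (fun n => rhoV v (s n) x) atTop (𝓝 0) := by
  obtain ⟨x, hx⟩ := cauchySeq_tendsto_of_complete <| Metric.cauchySeq_iff.2 fun ε hε =>
    (hcau ε hε).imp fun N hN m hm n hn => (dist_le_rhoV v _ _).trans_lt (hN m hm n hn)
  have hρ : Tendsto (fun n => rhoV v (s n) x) atTop (𝓝 0) := by
    refine Metric.tendsto_atTop.2 fun ε hε => ?_
    obtain ⟨N, hN⟩ := hcau (ε / 2) (half_pos hε)
    refine ⟨N, fun m hm => ?_⟩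
    have hle : rhoV v (s m) x ≤ ε / 2 :=
      rhoV_le_of_tendsto hcont hx (eventually_atTop.2 ⟨N, fun n hn => (hN m hm n hn).le⟩)
    rw [Real.dist_eq, sub_zero, abs_of_nonneg (rhoV_nonneg v _ _)]
    linarith
  exact ⟨x, tendsto_zero_of_tendsto_rhoV hs hρ, hρ⟩

end rhoV

theorem characterized_subgroup_polishable_general {X : Type*}
    [MetricSpace X] [CompactSpace X]
    (v : ℕ → X → AddCircle (1 : ℝ))
    (hcont : ∀ n, Continuous (v n)) :
    -- separability of `(s_v(X), ρ_v)`
    (∃ D : Set X, D.Countable ∧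
      (∀ d ∈ D, Tendsto (fun n => v n d) atTop (𝓝 0)) ∧
      ∀ x : X, Tendsto (fun n => v n x) atTop (𝓝 0) →
        ∀ ε > (0 : ℝ), ∃ d ∈ D, rhoV v x d < ε) ∧
    -- completeness of `(s_v(X), ρ_v)`
    (∀ s : ℕ → X, (∀ n, Tendsto (fun m => v m (s n)) atTop (𝓝 0)) →
      (∀ ε > (0 : ℝ), ∃ N, ∀ m ≥ N, ∀ n ≥ N, rhoV v (s m) (s n) < ε) →
      ∃ x : X, Tendsto (fun n => v n x) atTop (𝓝 0) ∧
        Tendsto (fun n => rhoV v (s n) x) atTop (𝓝 0)) :=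
  ⟨exists_countable_rhoV_dense hcont,
    fun _ hs hcau => exists_tendsto_rhoV_of_cauchy hcont hs hcau⟩

/-- Gabriyelyan: the characterized subgroup `s_v(X) = {x : v_n(x) → 0}`,
endowed with (the restriction of) the topology of `ρ_v`, is a Polish group:
it is separable and `ρ_v`-complete within `s_v(X)`. In particular every
characterized subgroup of a compact metrizable abelian group is Polishable. -/
theorem characterized_subgroup_polishable {X : Type*} [AddCommGroup X]
    [MetricSpace X] [CompactSpace X] [IsTopologicalAddGroup X]
    (hinv : ∀ a x y : X, dist (a + x) (a + y) = dist x y)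
    (v : ℕ → X → AddCircle (1 : ℝ))
    (hcont : ∀ n, Continuous (v n))
    (hadd : ∀ n, ∀ x y : X, v n (x + y) = v n x + v n y) :
    -- separability of `(s_v(X), ρ_v)`
    (∃ D : Set X, D.Countable ∧
      (∀ d ∈ D, Tendsto (fun n => v n d) atTop (𝓝 0)) ∧
      ∀ x : X, Tendsto (fun n => v n x) atTop (𝓝 0) →
        ∀ ε > (0 : ℝ), ∃ d ∈ D, rhoV v x d < ε) ∧
    -- completeness of `(s_v(X), ρ_v)`
    (∀ s : ℕ → X, (∀ n, Tendsto (fun m => v m (s n)) atTop (𝓝 0)) →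
      (∀ ε > (0 : ℝ), ∃ N, ∀ m ≥ N, ∀ n ≥ N, rhoV v (s m) (s n) < ε) →
      ∃ x : X, Tendsto (fun n => v n x) atTop (𝓝 0) ∧
        Tendsto (fun n => rhoV v (s n) x) atTop (𝓝 0)) :=
  characterized_subgroup_polishable_general v hcont
end
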